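/- Let G be a locally compact group, μ a left Haar measure, d a left-invariant metric of at most exponential growth with constants a, b > 0, and c > b. Let H be a Hilbert space and R : G → H bounded and continuous; define R'(x)(z) = √(h(z))·R(z⁻¹x) with h(z) = e^{-c·d(z,e)}/∫ e^{-c·d(x,e)}dμ(x), and let K_R be the closed linear span of {R'(x) : x ∈ G} in L²(G,H,μ). Then there exists a unique strongly continuous representation π_R of G on K_R such that π_R(g) R'(x) = R'(gx) for all g, x ∈ G, and moreover ‖π_R(g)‖ ≤ e^{(c/2)·d(g,e)} for all g ∈ G. -/

import Mathlib

/-!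
Write `√h = e^{-(c/2) d(·,e)} / √N`. The operators
`T_g F (z) = (√h z / √h (g⁻¹ z)) • F (g⁻¹ z)` are left translation on `L²(G, H, μ)` conjugated by
multiplication with `√h`, so they form a representation of `G` on all of `L²` with
`T_g R'(x) = R'(g x)`. Subadditivity of `d(·,e)` bounds the weight `√h z / √h (g⁻¹ z)` by
`e^{(c/2) d(g,e)}`, hence `‖T_g‖ ≤ e^{(c/2) d(g,e)}`. The closed span `K_R` of the `R'(x)` is
`T`-invariant, and `π_R` is the restriction of `T` to it; it is unique because the `R'(x)` span a
dense subspace. Finally `g ↦ T_g R'(x) = R'(g x)` is continuous by dominated convergence, and this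
extends to all of `K_R` because `‖T_g‖` is bounded near `e`: by Steinhaus' theorem the measurable
subadditive function `d(·,e)` is bounded on a neighbourhood of `e`.
-/


open MeasureTheory Filter Topology
open scoped ENNReal

namespace MeasureTheory.Lp

variable {α E : Type*} [MeasurableSpace α] {μ : Measure α} [NormedAddCommGroup E] {p : ℝ≥0∞}

theorem exists_toLp_eq (F : Lp E p μ) : ∃ f, ∃ hf : MemLp f p μ, hf.toLp f = F :=
  ⟨F, Lp.memLp F, Lp.toLp_coeFn F _⟩

theorem tendsto_toLp_of_dominated [Fact (1 ≤ p)] (hp : p ≠ ∞) {ι : Type*} {l : Filter ι}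
    [l.IsCountablyGenerated] {F : ι → α → E} {f : α → E} (hF : ∀ i, MemLp (F i) p μ)
    (hf : MemLp f p μ) {bound : α → ℝ} (hbound : MemLp bound p μ)
    (h_le : ∀ i, ∀ᵐ z ∂μ, ‖F i z‖ ≤ bound z)
    (h_lim : ∀ᵐ z ∂μ, Tendsto (F · z) l (𝓝 (f z))) :
    Tendsto (fun i => (hF i).toLp (F i)) l (𝓝 (hf.toLp f)) := by
  have hp0 : p ≠ 0 := (zero_lt_one.trans_le Fact.out).ne'
  have hp_pos : 0 < p.toReal := ENNReal.toReal_pos hp0 hp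
  have h_int : Tendsto (fun i => ∫⁻ z, ‖F i z - f z‖ₑ ^ p.toReal ∂μ) l (𝓝 0) := by
    have h_diff_le : ∀ i, ∀ᵐ z ∂μ,
        ‖F i z - f z‖ₑ ^ p.toReal ≤ ‖bound z + ‖f z‖‖ₑ ^ p.toReal := by
      intro i
      filter_upwards [h_le i] with z hFz
      rw [← ofReal_norm, ← ofReal_norm]
      gcongr
      calc ‖F i z - f z‖ ≤ ‖F i z‖ + ‖f z‖ := norm_sub_le _ _
        _ ≤ ‖bound z + ‖f z‖‖ := by
          rw [Real.norm_eq_abs]; exact (add_le_add_left hFz _).trans (le_abs_self _)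
    have h_fin : ∫⁻ z, ‖bound z + ‖f z‖‖ₑ ^ p.toReal ∂μ ≠ ∞ :=
      (lintegral_rpow_enorm_lt_top_of_eLpNorm_lt_top hp0 hp (hbound.add hf.norm).2).ne
    have h_meas : ∀ i, AEMeasurable (fun z => ‖F i z - f z‖ₑ ^ p.toReal) μ := fun i =>
      ((hF i).sub hf).1.enorm.pow_const _
    have h_lim' : ∀ᵐ z ∂μ, Tendsto (fun i => ‖F i z - f z‖ₑ ^ p.toReal) l (𝓝 0) := by
      filter_upwards [h_lim] with z hz
      simpa [ENNReal.zero_rpow_of_pos hp_pos] using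
        (hz.sub_const (f z)).enorm.ennrpow_const p.toReal
    simpa using tendsto_lintegral_filter_of_dominated_convergence' (f := fun _ => 0) _
      (.of_forall h_meas) (.of_forall h_diff_le) h_fin h_lim'
  rw [Lp.tendsto_Lp_iff_tendsto_eLpNorm'']
  simp only [eLpNorm_eq_lintegral_rpow_enorm_toReal hp0 hp, Pi.sub_apply, one_div]
  have h_root := (ENNReal.continuous_rpow_const (y := p.toReal⁻¹)).tendsto 0 |>.comp h_int
  rwa [ENNReal.zero_rpow_of_pos (inv_pos.2 hp_pos)] at h_root

variable [NormedSpace ℝ E]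

theorem memLp_smul_bounded {s : α → ℝ} (hs : MemLp s p μ) {f : α → E}
    (hf : AEStronglyMeasurable f μ) {M : ℝ} (hM : ∀ z, ‖f z‖ ≤ M) :
    MemLp (fun z => s z • f z) p μ :=
  hs.of_le_mul (c := M) (hs.1.smul hf) <| .of_forall fun z => by
    rw [norm_smul, mul_comm]; gcongr; exact hM z

theorem continuous_toLp_smul [Fact (1 ≤ p)] (hp : p ≠ ∞) {X : Type*} [TopologicalSpace X]
    [FirstCountableTopology X] {s : α → ℝ} (hs : MemLp s p μ) {F : X → α → E} {M : ℝ}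
    (hF_le : ∀ x z, ‖F x z‖ ≤ M) (hF_cont : ∀ z, Continuous (F · z))
    (hmem : ∀ x, MemLp (fun z => s z • F x z) p μ) :
    Continuous fun x => (hmem x).toLp fun z => s z • F x z := by
  refine continuous_iff_continuousAt.2 fun x => ?_
  refine tendsto_toLp_of_dominated hp hmem (hmem x) (hs.norm.const_mul M)
    (fun y => .of_forall fun z => ?_) (.of_forall fun z => ((hF_cont z).tendsto x).const_smul _)
  rw [norm_smul, mul_comm]
  exact mul_le_mul_of_nonneg_right (hF_le y z) (norm_nonneg _)

variable {𝕜 : Type*} [NormedField 𝕜] [NormedSpace 𝕜 E] [SMulCommClass ℝ 𝕜 E] {w : α → ℝ}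

theorem memLp_bounded_smul (hw : Measurable w) {C : ℝ} (hC : ∀ z, ‖w z‖ ≤ C) {f : α → E}
    (hf : MemLp f p μ) : MemLp (fun z => w z • f z) p μ :=
  hf.of_le_mul (hw.aestronglyMeasurable.smul hf.1) <| .of_forall fun z => by
    rw [norm_smul]; gcongr; exact hC z

theorem norm_toLp_smul_le (hw : Measurable w) {C : ℝ} (hC0 : 0 ≤ C) (hC : ∀ z, ‖w z‖ ≤ C)
    {f : α → E} (hf : MemLp f p μ) :
    ‖(memLp_bounded_smul hw hC hf).toLp fun z => w z • f z‖ ≤ C * ‖hf.toLp f‖ := by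
  rw [Lp.norm_toLp, Lp.norm_toLp, ← ENNReal.toReal_ofReal hC0, ← ENNReal.toReal_mul]
  refine ENNReal.toReal_mono (ENNReal.mul_ne_top ENNReal.ofReal_ne_top hf.eLpNorm_ne_top) ?_
  refine eLpNorm_le_mul_eLpNorm_of_ae_le_mul (.of_forall fun z => ?_) p
  rw [norm_smul]; gcongr; exact hC z

variable [Fact (1 ≤ p)]

variable (𝕜) in
noncomputable def smulOfBounded (hw : Measurable w) (hbdd : ∃ C, ∀ z, ‖w z‖ ≤ C) :
    Lp E p μ →L[𝕜] Lp E p μ :=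
  LinearMap.mkContinuousOfExistsBound
    { toFun := fun F =>
        (memLp_bounded_smul hw hbdd.choose_spec (Lp.memLp F)).toLp fun z => w z • F z
      map_add' := fun F F' => by
        rw [← MemLp.toLp_add]
        refine MemLp.toLp_congr _ _ ?_
        filter_upwards [Lp.coeFn_add F F'] with z hz
        rw [hz, Pi.add_apply, smul_add, Pi.add_apply]
      map_smul' := fun m F => by
        rw [RingHom.id_apply, ← MemLp.toLp_const_smul]
        refine MemLp.toLp_congr _ _ ?_
        filter_upwards [Lp.coeFn_smul m F] with z hz
        rw [hz, Pi.smul_apply, smul_comm, Pi.smul_apply] }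
    ⟨max hbdd.choose 0, fun F => by
      simpa [Lp.toLp_coeFn] using norm_toLp_smul_le hw (le_max_right _ _)
        (fun z => (hbdd.choose_spec z).trans (le_max_left _ 0)) (Lp.memLp F)⟩

theorem smulOfBounded_apply (hw : Measurable w) (hbdd : ∃ C, ∀ z, ‖w z‖ ≤ C) (F : Lp E p μ) :
    smulOfBounded 𝕜 hw hbdd F =
      (memLp_bounded_smul hw hbdd.choose_spec (Lp.memLp F)).toLp fun z => w z • F z :=
  rfl

theorem smulOfBounded_toLp (hw : Measurable w) (hbdd : ∃ C, ∀ z, ‖w z‖ ≤ C) {f : α → E}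
    (hf : MemLp f p μ) :
    smulOfBounded 𝕜 hw hbdd (hf.toLp f) =
      (memLp_bounded_smul hw hbdd.choose_spec hf).toLp fun z => w z • f z := by
  rw [smulOfBounded_apply]
  refine MemLp.toLp_congr _ _ ?_
  filter_upwards [hf.coeFn_toLp] with z hz
  rw [hz]

theorem norm_smulOfBounded_apply_le (hw : Measurable w) {C : ℝ} (hC0 : 0 ≤ C)
    (hC : ∀ z, ‖w z‖ ≤ C) (F : Lp E p μ) : ‖smulOfBounded 𝕜 hw ⟨C, hC⟩ F‖ ≤ C * ‖F‖ := by
  obtain ⟨f, hf, rfl⟩ := exists_toLp_eq F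
  rw [smulOfBounded_toLp]
  exact norm_toLp_smul_le hw hC0 hC hf

end MeasureTheory.Lp

section WeightedLeftRegular

variable {G : Type*} [Group G] {ρ : G → ℝ}

theorem norm_div_translate_le (hρ_pos : ∀ z, 0 < ρ z) {g : G} {C : ℝ}
    (hC : ∀ z, ρ z ≤ C * ρ (g⁻¹ * z)) (z : G) : ‖ρ z / ρ (g⁻¹ * z)‖ ≤ C := by
  rw [Real.norm_of_nonneg (div_pos (hρ_pos _) (hρ_pos _)).le, div_le_iff₀ (hρ_pos _)]
  exact hC z

theorem Measurable.div_translate [MeasurableSpace G] [MeasurableMul G] (hρ : Measurable ρ)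
    (g : G) : Measurable fun z => ρ z / ρ (g⁻¹ * z) :=
  hρ.div (hρ.comp (measurable_const_mul g⁻¹))

variable [MeasurableSpace G] [MeasurableMul G] {μ : Measure G} [μ.IsMulLeftInvariant]
  {E 𝕜 : Type*} [NormedAddCommGroup E] [NormedSpace ℝ E] [NontriviallyNormedField 𝕜]
  [NormedSpace 𝕜 E] [SMulCommClass ℝ 𝕜 E] {p : ℝ≥0∞}
  (hρ : Measurable ρ) (hρ_pos : ∀ z, 0 < ρ z) (hρ_bdd : ∀ g, ∃ C, ∀ z, ρ z ≤ C * ρ (g⁻¹ * z))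
include hρ hρ_pos hρ_bdd

theorem memLp_div_translate_smul (g : G) {f : G → E} (hf : MemLp f p μ) :
    MemLp (fun z => (ρ z / ρ (g⁻¹ * z)) • f (g⁻¹ * z)) p μ :=
  Lp.memLp_bounded_smul (hρ.div_translate g)
    (norm_div_translate_le hρ_pos (hρ_bdd g).choose_spec)
    (hf.comp_measurePreserving (measurePreserving_mul_left μ g⁻¹))

variable [Fact (1 ≤ p)]

/- Left translation by `g`, conjugated by multiplication with `ρ`. Only the ratios
`ρ z / ρ (g⁻¹ * z)` need to be bounded; `ρ⁻¹` itself may be unbounded. -/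
variable (μ E 𝕜 p) in
noncomputable def weightedTranslation (g : G) : Lp E p μ →L[𝕜] Lp E p μ :=
  Lp.smulOfBounded 𝕜 (hρ.div_translate g)
      ((hρ_bdd g).imp fun _ => norm_div_translate_le hρ_pos) ∘L
    (Lp.compMeasurePreservingₗᵢ 𝕜 _ (measurePreserving_mul_left μ g⁻¹)).toContinuousLinearMap

theorem weightedTranslation_toLp (g : G) {f : G → E} (hf : MemLp f p μ) :
    weightedTranslation μ E 𝕜 p hρ hρ_pos hρ_bdd g (hf.toLp f) =
      (memLp_div_translate_smul hρ hρ_pos hρ_bdd g hf).toLp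
        fun z => (ρ z / ρ (g⁻¹ * z)) • f (g⁻¹ * z) := by
  have h_translate : Lp.compMeasurePreservingₗᵢ 𝕜 _ (measurePreserving_mul_left μ g⁻¹)
      (hf.toLp f) = (hf.comp_measurePreserving (measurePreserving_mul_left μ g⁻¹)).toLp
        fun z => f (g⁻¹ * z) :=
    Lp.toLp_compMeasurePreserving hf _
  rw [weightedTranslation, ContinuousLinearMap.comp_apply,
    LinearIsometry.coe_toContinuousLinearMap, h_translate, Lp.smulOfBounded_toLp]

variable (μ E 𝕜 p) in
noncomputable def weightedLeftRegular : G →* (Lp E p μ →L[𝕜] Lp E p μ) where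
  toFun := weightedTranslation μ E 𝕜 p hρ hρ_pos hρ_bdd
  map_one' := by
    ext1 F
    obtain ⟨f, hf, rfl⟩ := Lp.exists_toLp_eq F
    rw [weightedTranslation_toLp, one_apply_eq_self]
    refine MemLp.toLp_congr _ _ (.of_forall fun z => ?_)
    simp [div_self (hρ_pos z).ne']
  map_mul' g g' := by
    ext1 F
    obtain ⟨f, hf, rfl⟩ := Lp.exists_toLp_eq F
    rw [mul_apply_eq_comp, weightedTranslation_toLp, weightedTranslation_toLp,
      weightedTranslation_toLp]
    refine MemLp.toLp_congr _ _ (.of_forall fun z => ?_)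
    simp only [smul_smul, mul_inv_rev, mul_assoc]
    congr 1
    field_simp [(hρ_pos _).ne']

theorem weightedLeftRegular_toLp_smul (g : G) {u : G → E}
    (hu : MemLp (fun z => ρ z • u z) p μ) (hu' : MemLp (fun z => ρ z • u (g⁻¹ * z)) p μ) :
    weightedLeftRegular μ E 𝕜 p hρ hρ_pos hρ_bdd g (hu.toLp _) = hu'.toLp _ := by
  refine (weightedTranslation_toLp hρ hρ_pos hρ_bdd g hu).trans
    (MemLp.toLp_congr _ _ (.of_forall fun z => ?_))
  simp only [smul_smul, div_mul_cancel₀ _ (hρ_pos _).ne']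

theorem norm_weightedLeftRegular_le (g : G) {C : ℝ} (hC : ∀ z, ρ z ≤ C * ρ (g⁻¹ * z)) :
    ‖weightedLeftRegular μ E 𝕜 p hρ hρ_pos hρ_bdd g‖ ≤ C := by
  have hC0 : 0 ≤ C := nonneg_of_mul_nonneg_left ((hρ_pos 1).le.trans (hC 1)) (hρ_pos _)
  refine ContinuousLinearMap.opNorm_le_bound _ hC0 fun F => ?_
  calc ‖weightedTranslation μ E 𝕜 p hρ hρ_pos hρ_bdd g F‖
      ≤ C * ‖Lp.compMeasurePreservingₗᵢ 𝕜 _ (measurePreserving_mul_left μ g⁻¹) F‖ :=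
        Lp.norm_smulOfBounded_apply_le (𝕜 := 𝕜) (hρ.div_translate g) hC0
          (norm_div_translate_le hρ_pos hC) _
    _ = C * ‖F‖ := by rw [LinearIsometry.norm_map]

end WeightedLeftRegular

section InvariantSubspace

variable {G R M : Type*} [Group G] [Ring R] [TopologicalSpace M] [AddCommGroup M] [Module R M]

namespace MonoidHom

variable (T : G →* (M →L[R] M)) (K : Submodule R M) (hK : ∀ g, ∀ x ∈ K, T g x ∈ K)

noncomputable def restrictInvariant : G →* (K ≃L[R] K) :=
  (ContinuousLinearEquiv.unitsEquiv R K).toMonoidHom.comp <| MonoidHom.toHomUnits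
    { toFun := fun g => (T g).restrict (hK g)
      map_one' := by ext; simp
      map_mul' := fun g g' => by ext; simp }

end MonoidHom

variable [ContinuousAdd M] [ContinuousConstSMul R M]

theorem Submodule.mapsTo_topologicalClosure_span {s : Set M} (f : M →L[R] M)
    (hf : ∀ x ∈ s, f x ∈ s) :
    ∀ x ∈ (span R s).topologicalClosure, f x ∈ (span R s).topologicalClosure := by
  have hcomap : span R s ≤ ((span R s).topologicalClosure).comap (f : M →ₗ[R] M) :=
    span_le.2 fun x hx => le_topologicalClosure _ (subset_span (hf x hx))
  exact topologicalClosure_minimal _ hcomap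
    ((isClosed_topologicalClosure _).preimage f.continuous)

theorem Submodule.dense_span_range_subtype_topologicalClosure {ι : Type*} (v : ι → M)
    (hv : ∀ i, v i ∈ (span R (Set.range v)).topologicalClosure) :
    Dense (span R (Set.range fun i => (⟨v i, hv i⟩ : (span R (Set.range v)).topologicalClosure)) :
      Set (span R (Set.range v)).topologicalClosure) := by
  have h_image : Subtype.val '' (span R (Set.range fun i =>
      (⟨v i, hv i⟩ : (span R (Set.range v)).topologicalClosure)) :
        Set (span R (Set.range v)).topologicalClosure) = (span R (Set.range v) : Set M) := by
    change Submodule.subtype _ '' _ = _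
    rw [← map_coe, map_span, ← Set.range_comp]
    rfl
  intro ξ
  rw [closure_subtype, h_image, ← topologicalClosure_coe]
  exact ξ.2

theorem MonoidHom.eq_of_apply_generators [T2Space M] {ι : Type*} (v : ι → M)
    (hv : ∀ i, v i ∈ (Submodule.span R (Set.range v)).topologicalClosure)
    (π₁ π₂ : G →* ((Submodule.span R (Set.range v)).topologicalClosure ≃L[R]
      (Submodule.span R (Set.range v)).topologicalClosure))
    (h : ∀ g i, π₁ g ⟨v i, hv i⟩ = π₂ g ⟨v i, hv i⟩) : π₁ = π₂ := by
  ext1 g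
  apply ContinuousLinearEquiv.coe_inj.1
  refine ContinuousLinearMap.ext_on (Submodule.dense_span_range_subtype_topologicalClosure v hv) ?_
  rintro _ ⟨i, rfl⟩
  exact h g i

end InvariantSubspace

section StrongContinuity

variable {𝕜 E F : Type*} [NontriviallyNormedField 𝕜] [NormedAddCommGroup E] [NormedSpace 𝕜 E]
  [NormedAddCommGroup F] [NormedSpace 𝕜 F]

theorem MonoidHom.norm_restrictInvariant_le {G : Type*} [Group G] (T : G →* (E →L[𝕜] E))
    (K : Submodule 𝕜 E) (hK : ∀ g, ∀ x ∈ K, T g x ∈ K) (g : G) :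
    ‖(T.restrictInvariant K hK g).toContinuousLinearMap‖ ≤ ‖T g‖ :=
  ContinuousLinearMap.opNorm_le_bound _ (norm_nonneg _) fun x => (T g).le_opNorm x

theorem ContinuousLinearMap.tendsto_apply_of_mem_closure {ι : Type*} {l : Filter ι}
    {A : ι → E →L[𝕜] F} {B : E →L[𝕜] F} {C : ℝ} (hA : ∀ᶠ i in l, ‖A i‖ ≤ C) {s : Set E}
    (hs : ∀ u ∈ s, Tendsto (fun i => A i u) l (𝓝 (B u))) {v : E} (hv : v ∈ closure s) :
    Tendsto (fun i => A i v) l (𝓝 (B v)) := by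
  rw [Metric.tendsto_nhds]
  intro ε hε
  set C' := max C 0
  have hC' : 0 < C' + ‖B‖ + 2 := by positivity
  set δ := ε / (C' + ‖B‖ + 2)
  have hδ : 0 < δ := div_pos hε hC'
  obtain ⟨u, hu, hvu⟩ := Metric.mem_closure_iff.1 hv δ hδ
  filter_upwards [hA, Metric.tendsto_nhds.1 (hs u hu) δ hδ] with i hAi hi
  rw [dist_eq_norm] at hvu hi ⊢
  have hAi' : ‖A i (v - u)‖ ≤ C' * δ :=
    ((A i).le_opNorm _).trans (mul_le_mul (hAi.trans (le_max_left _ _)) hvu.le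
      (norm_nonneg _) (le_max_right _ _))
  have hBu : ‖B (u - v)‖ ≤ ‖B‖ * δ :=
    (B.le_opNorm _).trans (by rw [norm_sub_rev]; gcongr)
  calc ‖A i v - B v‖ = ‖A i (v - u) + (A i u - B u) + B (u - v)‖ := by
        simp only [map_sub]; abel_nf
    _ ≤ ‖A i (v - u)‖ + ‖A i u - B u‖ + ‖B (u - v)‖ := norm_add₃_le
    _ < C' * δ + δ + ‖B‖ * δ + δ := by linarith
    _ = (C' + ‖B‖ + 2) * δ := by ring
    _ = ε := mul_div_cancel₀ _ hC'.ne'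

theorem ContinuousLinearMap.tendsto_apply_of_mem_span {ι : Type*} {l : Filter ι}
    {A : ι → E →L[𝕜] F} {B : E →L[𝕜] F} {s : Set E}
    (hs : ∀ u ∈ s, Tendsto (fun i => A i u) l (𝓝 (B u))) {v : E} (hv : v ∈ Submodule.span 𝕜 s) :
    Tendsto (fun i => A i v) l (𝓝 (B v)) := by
  induction hv using Submodule.span_induction with
  | mem u hu => exact hs u hu
  | zero => simpa using tendsto_const_nhds
  | add u u' _ _ hu hu' => simpa using hu.add hu'
  | smul c u _ hu => simpa using hu.const_smul c

theorem ContinuousLinearMap.tendsto_apply_of_mem_topologicalClosure_span {ι : Type*}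
    {l : Filter ι} {A : ι → E →L[𝕜] F} {B : E →L[𝕜] F} {C : ℝ} (hA : ∀ᶠ i in l, ‖A i‖ ≤ C)
    {s : Set E} (hs : ∀ u ∈ s, Tendsto (fun i => A i u) l (𝓝 (B u))) {v : E}
    (hv : v ∈ (Submodule.span 𝕜 s).topologicalClosure) :
    Tendsto (fun i => A i v) l (𝓝 (B v)) :=
  tendsto_apply_of_mem_closure hA (fun _ hu => tendsto_apply_of_mem_span hs hu)
    (by rwa [← Submodule.topologicalClosure_coe])

variable {G : Type*} [Group G] [TopologicalSpace G] [IsTopologicalGroup G]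

theorem MonoidHom.continuous_apply_of_tendsto_nhds_one (T : G →* (E →L[𝕜] E)) {v : E}
    (hv : Tendsto (fun g => T g v) (𝓝 1) (𝓝 v)) : Continuous fun g => T g v := by
  refine continuous_iff_continuousAt.2 fun g₀ => ?_
  have h_shift : Tendsto (fun g => g₀⁻¹ * g) (𝓝 g₀) (𝓝 1) :=
    (continuous_const.mul continuous_id).tendsto' g₀ 1 (inv_mul_cancel g₀)
  have h_eq : (fun g => T g v) = fun g => T g₀ (T (g₀⁻¹ * g) v) := by
    ext g; rw [← mul_apply_eq_comp, ← map_mul, mul_inv_cancel_left]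
  rw [ContinuousAt, h_eq]
  exact (T g₀).continuous.continuousAt.tendsto.comp (hv.comp h_shift)

theorem MonoidHom.exists_restrict_topologicalClosure_span_orbit (T : G →* (E →L[𝕜] E))
    {v : G → E} (hv : Continuous v) (hTv : ∀ g x, T g (v x) = v (g * x))
    (hT : ∃ C, ∀ᶠ g in 𝓝 1, ‖T g‖ ≤ C) :
    ∃ hK : ∀ x, v x ∈ (Submodule.span 𝕜 (Set.range v)).topologicalClosure,
    ∃ π : G →* ((Submodule.span 𝕜 (Set.range v)).topologicalClosure ≃L[𝕜]
      (Submodule.span 𝕜 (Set.range v)).topologicalClosure),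
      (∀ g x, π g ⟨v x, hK x⟩ = ⟨v (g * x), hK (g * x)⟩) ∧
      (∀ g, ‖(π g).toContinuousLinearMap‖ ≤ ‖T g‖) ∧
      (∀ ξ, Continuous fun g => (π g ξ : E)) ∧
      ∀ π' : G →* ((Submodule.span 𝕜 (Set.range v)).topologicalClosure ≃L[𝕜]
        (Submodule.span 𝕜 (Set.range v)).topologicalClosure),
        (∀ g x, π' g ⟨v x, hK x⟩ = ⟨v (g * x), hK (g * x)⟩) → π' = π := by
  set K := (Submodule.span 𝕜 (Set.range v)).topologicalClosure
  have hK : ∀ x, v x ∈ K := fun x =>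
    Submodule.le_topologicalClosure _ (Submodule.subset_span ⟨x, rfl⟩)
  have hK_inv : ∀ g, ∀ ξ ∈ K, T g ξ ∈ K := fun g =>
    Submodule.mapsTo_topologicalClosure_span (T g)
      (by rintro _ ⟨x, rfl⟩; exact ⟨g * x, (hTv g x).symm⟩)
  have hπ : ∀ g x, T.restrictInvariant K hK_inv g ⟨v x, hK x⟩ = ⟨v (g * x), hK (g * x)⟩ :=
    fun g x => Subtype.ext (hTv g x)
  obtain ⟨C, hC⟩ := hT
  refine ⟨hK, T.restrictInvariant K hK_inv, hπ, T.norm_restrictInvariant_le K hK_inv,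
    fun ξ => T.continuous_apply_of_tendsto_nhds_one ?_,
    fun π' hπ' => MonoidHom.eq_of_apply_generators v hK _ _ fun g x =>
      (hπ' g x).trans (hπ g x).symm⟩
  refine ContinuousLinearMap.tendsto_apply_of_mem_topologicalClosure_span
    (B := ContinuousLinearMap.id 𝕜 E) hC ?_ ξ.2
  rintro _ ⟨x, rfl⟩
  simp only [hTv, ContinuousLinearMap.id_apply]
  exact (hv.tendsto x).comp ((continuous_id.mul continuous_const).tendsto' 1 x (one_mul x))

end StrongContinuity

theorem exists_eventually_nhds_one_le_of_subadditive {G : Type*} [Group G] [TopologicalSpace G]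
    [IsTopologicalGroup G] [LocallyCompactSpace G] [MeasurableSpace G] [BorelSpace G]
    (μ : Measure G) [μ.IsHaarMeasure] [μ.InnerRegular] {φ : G → ℝ} (hφ : Measurable φ)
    (h_mul : ∀ x y, φ (x * y) ≤ φ x + φ y) (h_inv : ∀ x, φ x⁻¹ = φ x) :
    ∃ C, ∀ᶠ g in 𝓝 1, φ g ≤ C := by
  obtain ⟨n, hn⟩ : ∃ n : ℕ, 0 < μ {z | φ z < n} := by
    refine exists_measure_pos_of_not_measure_iUnion_null fun h_null => ?_
    have h_univ : ⋃ n : ℕ, {z | φ z < n} = Set.univ :=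
      Set.iUnion_eq_univ_iff.2 fun z => exists_nat_gt (φ z)
    rw [h_univ] at h_null
    exact (Measure.measure_univ_pos.2 (NeZero.ne μ)).ne' h_null
  refine ⟨2 * n, ?_⟩
  -- Steinhaus: `E / E` is a neighbourhood of `1` for `E = {φ < n}`, and `φ < 2n` on `E / E`.
  filter_upwards [Measure.div_mem_nhds_one_of_haar_pos μ _ (hφ measurableSet_Iio) hn]
  rintro _ ⟨p, hp, q, hq, rfl⟩
  have h_le := h_mul p q⁻¹
  rw [h_inv] at h_le
  change φ (p / q) ≤ 2 * n
  rw [div_eq_mul_inv]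
  linarith [show φ p < n from hp, show φ q < n from hq]

section LeftInvariantDist

variable {G : Type*} [Group G] {d : G → G → ℝ}

theorem leftInvariant_dist_mul_one_le (hd_tri : ∀ x y z : G, d x z ≤ d x y + d y z)
    (hd_inv : ∀ g x y : G, d (g * x) (g * y) = d x y) (x y : G) :
    d (x * y) 1 ≤ d x 1 + d y 1 := by
  have h_eq : d (x * y) x = d y 1 := by rw [← hd_inv x y 1, mul_one]
  linarith [hd_tri (x * y) x 1]

theorem leftInvariant_dist_inv_one (hd_symm : ∀ x y : G, d x y = d y x)
    (hd_inv : ∀ g x y : G, d (g * x) (g * y) = d x y) (x : G) : d x⁻¹ 1 = d x 1 := by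
  rw [← hd_inv x x⁻¹ 1, mul_inv_cancel, mul_one, hd_symm]

end LeftInvariantDist

theorem MeasureTheory.Integrable.memLp_two_sqrt {α : Type*} [MeasurableSpace α] {μ : Measure α}
    {h : α → ℝ} (hh : Integrable h μ) (hh0 : ∀ z, 0 ≤ h z) : MemLp (fun z => √(h z)) 2 μ :=
  (memLp_two_iff_integrable_sq (Real.continuous_sqrt.comp_aestronglyMeasurable hh.1)).2
    (hh.congr (.of_forall fun z => (Real.sq_sqrt (hh0 z)).symm))

theorem sqrt_exp_div_le_mul {G : Type*} [Group G] {φ : G → ℝ}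
    (h_mul : ∀ x y, φ (x * y) ≤ φ x + φ y) (h_inv : ∀ x, φ x⁻¹ = φ x) {c N : ℝ} (hc : 0 ≤ c)
    (hN : 0 < N) (g z : G) :
    √(Real.exp (-c * φ z) / N) ≤ Real.exp (c / 2 * φ g) * √(Real.exp (-c * φ (g⁻¹ * z)) / N) := by
  rw [show c / 2 * φ g = c * φ g / 2 by ring, Real.exp_half, ← Real.sqrt_mul (Real.exp_pos _).le,
    mul_div_assoc', ← Real.exp_add]
  refine Real.sqrt_le_sqrt (div_le_div_of_nonneg_right (Real.exp_le_exp.2 ?_) hN.le)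
  have h_le := h_mul g⁻¹ z
  rw [h_inv] at h_le
  nlinarith

theorem exists_representation_closure_span_weighted_orbit {G : Type*} [Group G]
    [TopologicalSpace G] [IsTopologicalGroup G] [LocallyCompactSpace G] [SecondCountableTopology G]
    [MeasurableSpace G] [BorelSpace G] (μ : Measure G) [μ.IsHaarMeasure] {φ : G → ℝ}
    (hφ : Measurable φ) (hφ_mul : ∀ x y, φ (x * y) ≤ φ x + φ y) (hφ_inv : ∀ x, φ x⁻¹ = φ x)
    {ρ : G → ℝ} (hρ : Measurable ρ) (hρ_pos : ∀ z, 0 < ρ z) (hρ_mem : MemLp ρ 2 μ)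
    (hρ_le : ∀ g z, ρ z ≤ Real.exp (φ g) * ρ (g⁻¹ * z)) {𝕜 H : Type*} [NontriviallyNormedField 𝕜]
    [NormedAddCommGroup H] [NormedSpace 𝕜 H] [NormedSpace ℝ H] [SMulCommClass ℝ 𝕜 H]
    (R : G → H) (hR_cont : Continuous R) (hR_bdd : BddAbove (Set.range fun g => ‖R g‖)) :
    ∃ hmem : ∀ x : G, MemLp (fun z => ρ z • R (z⁻¹ * x)) 2 μ,
      let R' : G → Lp H 2 μ := fun x => (hmem x).toLp (fun z => ρ z • R (z⁻¹ * x))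
      let K : Submodule 𝕜 (Lp H 2 μ) := (Submodule.span 𝕜 (Set.range R')).topologicalClosure
      ∃ hK : ∀ x : G, R' x ∈ K,
      ∃ π : G →* (K ≃L[𝕜] K),
        (∀ g x : G, π g ⟨R' x, hK x⟩ = ⟨R' (g * x), hK (g * x)⟩) ∧
        (∀ g : G, ‖((π g).toContinuousLinearMap)‖ ≤ Real.exp (φ g)) ∧
        (∀ ξ : K, Continuous fun g : G => ((π g ξ : K) : Lp H 2 μ)) ∧
        ∀ π' : G →* (K ≃L[𝕜] K),
          (∀ g x : G, π' g ⟨R' x, hK x⟩ = ⟨R' (g * x), hK (g * x)⟩) → π' = π := by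
  obtain ⟨M, hM⟩ := hR_bdd
  have hR_le : ∀ x z, ‖R (z⁻¹ * x)‖ ≤ M := fun x z => hM ⟨_, rfl⟩
  have hmem : ∀ x, MemLp (fun z => ρ z • R (z⁻¹ * x)) 2 μ := fun x =>
    Lp.memLp_smul_bounded hρ_mem
      (hR_cont.comp (continuous_inv.mul continuous_const)).aestronglyMeasurable (hR_le x)
  refine ⟨hmem, ?_⟩
  intro R' K
  set T := weightedLeftRegular μ H 𝕜 2 hρ hρ_pos fun g => ⟨_, hρ_le g⟩
  have hT_norm : ∀ g, ‖T g‖ ≤ Real.exp (φ g) := fun g =>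
    norm_weightedLeftRegular_le _ _ _ g (hρ_le g)
  have hTR' : ∀ g x, T g (R' x) = R' (g * x) := by
    intro g x
    have h_translate : ∀ z, R ((g⁻¹ * z)⁻¹ * x) = R (z⁻¹ * (g * x)) := fun z => by
      rw [mul_inv_rev, inv_inv, mul_assoc]
    exact (weightedLeftRegular_toLp_smul _ _ _ g (hmem x)
      (by simpa only [h_translate] using hmem (g * x))).trans
      (MemLp.toLp_congr _ _ (.of_forall fun z => by simp only [h_translate]))
  have hR'_cont : Continuous R' :=
    Lp.continuous_toLp_smul ENNReal.ofNat_ne_top hρ_mem hR_le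
      (fun z => hR_cont.comp (continuous_const.mul continuous_id)) hmem
  obtain ⟨C, hC⟩ := exists_eventually_nhds_one_le_of_subadditive μ hφ hφ_mul hφ_inv
  obtain ⟨hK, π, hπ, hπ_norm, hπ_cont, hπ_unique⟩ :=
    T.exists_restrict_topologicalClosure_span_orbit hR'_cont hTR'
      ⟨_, hC.mono fun g hg => (hT_norm g).trans (Real.exp_le_exp.2 hg)⟩
  exact ⟨hK, π, hπ, fun g => (hπ_norm g).trans (hT_norm g), hπ_cont, hπ_unique⟩

theorem stmt_7_general {G : Type*} [Group G] [TopologicalSpace G] [IsTopologicalGroup G]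
    [LocallyCompactSpace G] [SecondCountableTopology G] [MeasurableSpace G] [BorelSpace G]
    (μ : Measure G) [μ.IsHaarMeasure]
    (d : G → G → ℝ)
    (hd_symm : ∀ x y : G, d x y = d y x)
    (hd_tri : ∀ x y z : G, d x z ≤ d x y + d y z)
    (hd_inv : ∀ g x y : G, d (g * x) (g * y) = d x y)
    (hd_meas : Measurable fun z : G => d z 1)
    (b : ℝ) (hb : 0 < b)
    (c : ℝ) (hc : b < c)
    (N : ℝ) (hN : N = ∫ x, Real.exp (-c * d x 1) ∂μ) (hN_pos : 0 < N)
    (h : G → ℝ) (hdef : ∀ z : G, h z = Real.exp (-c * d z 1) / N)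
    {H : Type*} [NormedAddCommGroup H] [InnerProductSpace ℂ H]
    (R : G → H) (hR_cont : Continuous R) (hR_bdd : BddAbove (Set.range fun g => ‖R g‖)) :
    ∃ hmem : ∀ x : G, MemLp (fun z => Real.sqrt (h z) • R (z⁻¹ * x)) 2 μ,
      let R' : G → Lp H 2 μ := fun x => (hmem x).toLp (fun z => Real.sqrt (h z) • R (z⁻¹ * x))
      let K : Submodule ℂ (Lp H 2 μ) := (Submodule.span ℂ (Set.range R')).topologicalClosure
      ∃ hK : ∀ x : G, R' x ∈ K,
      ∃ π : G →* (K ≃L[ℂ] K),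
        (∀ g x : G, π g ⟨R' x, hK x⟩ = ⟨R' (g * x), hK (g * x)⟩) ∧
        (∀ g : G, ‖((π g).toContinuousLinearMap)‖ ≤ Real.exp (c / 2 * d g 1)) ∧
        (∀ ξ : K, Continuous fun g : G => ((π g ξ : K) : Lp H 2 μ)) ∧
        ∀ π' : G →* (K ≃L[ℂ] K),
          (∀ g x : G, π' g ⟨R' x, hK x⟩ = ⟨R' (g * x), hK (g * x)⟩) → π' = π := by
  have hc0 : 0 ≤ c := (hb.trans hc).le
  have hd_mul := leftInvariant_dist_mul_one_le hd_tri hd_inv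
  have hd_inv_one := leftInvariant_dist_inv_one hd_symm hd_inv
  have hh_pos : ∀ z, 0 < h z := fun z => by rw [hdef]; positivity
  have hh_int : Integrable h μ :=
    ((Integrable.of_integral_ne_zero (hN ▸ hN_pos.ne')).div_const N).congr
      (.of_forall fun z => (hdef z).symm)
  have hρ_le : ∀ g z, √(h z) ≤ Real.exp (c / 2 * d g 1) * √(h (g⁻¹ * z)) := fun g z => by
    simpa only [hdef] using
      sqrt_exp_div_le_mul (φ := fun z => d z 1) hd_mul hd_inv_one hc0 hN_pos g z
  exact exists_representation_closure_span_weighted_orbit μ (φ := fun z => c / 2 * d z 1)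
    (hd_meas.const_mul _) (fun x y => by nlinarith [hd_mul x y]) (fun x => by rw [hd_inv_one])
    (by simp only [hdef]; fun_prop) (fun z => Real.sqrt_pos.2 (hh_pos z))
    (hh_int.memLp_two_sqrt fun z => (hh_pos z).le) hρ_le R hR_cont hR_bdd

/-- Lemma 2 of the paper: with `h(z) = e^{-c·d(z,e)}/N` for `c > b` and
`R'(x)(z) = √(h z) • R(z⁻¹x)`, letting `K_R` be the closed linear span of
`{R'(x) : x ∈ G}` in `L²(G,H,μ)`, there exists a unique representation `π_R` of `G`
on `K_R` with `π_R(g) R'(x) = R'(gx)`; it is strongly continuous and satisfies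
`‖π_R(g)‖ ≤ e^{(c/2)·d(g,e)}`. -/
theorem stmt_7 {G : Type*} [Group G] [TopologicalSpace G] [IsTopologicalGroup G]
    [LocallyCompactSpace G] [SecondCountableTopology G] [MeasurableSpace G] [BorelSpace G]
    (μ : Measure G) [μ.IsHaarMeasure]
    (d : G → G → ℝ)
    (hd_self : ∀ x y : G, d x y = 0 ↔ x = y)
    (hd_symm : ∀ x y : G, d x y = d y x)
    (hd_tri : ∀ x y z : G, d x z ≤ d x y + d y z)
    (hd_inv : ∀ g x y : G, d (g * x) (g * y) = d x y)
    (hd_meas : Measurable fun z : G => d z 1)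
    (a b : ℝ) (ha : 0 < a) (hb : 0 < b)
    (hgrowth : ∀ n : ℕ, 1 ≤ n →
      μ {g : G | d g 1 < (n : ℝ)} ≤ ENNReal.ofReal (a * Real.exp (b * n)))
    (c : ℝ) (hc : b < c)
    (N : ℝ) (hN : N = ∫ x, Real.exp (-c * d x 1) ∂μ) (hN_pos : 0 < N)
    (h : G → ℝ) (hdef : ∀ z : G, h z = Real.exp (-c * d z 1) / N)
    {H : Type*} [NormedAddCommGroup H] [InnerProductSpace ℂ H] [CompleteSpace H]
    (R : G → H) (hR_cont : Continuous R) (hR_bdd : BddAbove (Set.range fun g => ‖R g‖)) :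
    ∃ hmem : ∀ x : G, MemLp (fun z => Real.sqrt (h z) • R (z⁻¹ * x)) 2 μ,
      let R' : G → Lp H 2 μ := fun x => (hmem x).toLp (fun z => Real.sqrt (h z) • R (z⁻¹ * x))
      let K : Submodule ℂ (Lp H 2 μ) := (Submodule.span ℂ (Set.range R')).topologicalClosure
      ∃ hK : ∀ x : G, R' x ∈ K,
      ∃ π : G →* (K ≃L[ℂ] K),
        (∀ g x : G, π g ⟨R' x, hK x⟩ = ⟨R' (g * x), hK (g * x)⟩) ∧
        (∀ g : G, ‖((π g).toContinuousLinearMap)‖ ≤ Real.exp (c / 2 * d g 1)) ∧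
        (∀ ξ : K, Continuous fun g : G => ((π g ξ : K) : Lp H 2 μ)) ∧
        ∀ π' : G →* (K ≃L[ℂ] K),
          (∀ g x : G, π' g ⟨R' x, hK x⟩ = ⟨R' (g * x), hK (g * x)⟩) → π' = π :=
  stmt_7_general μ d hd_symm hd_tri hd_inv hd_meas b hb c hc N hN hN_pos h hdef R hR_cont hR_bdd
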